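/- Let d ≥ 1 be an integer, λ < 0, δ ∈ (0, √(−2λ)), and α ∈ (0, 1 − δ/√(−2λ)). Let c₀ be a real number with max(0, √2·δ/(1−α) − √(−λ))² < c₀ < −λ. Let a, g : (0,∞) → ℝ satisfy a(t) = o(t) and g(t) = o(t) as t → ∞, and let s : (0,∞) → [0,∞) satisfy s(t) ≤ αt for all t. Then there exist constants C > 0 and T > 0 such that for all t ≥ T, e^{g(t)} · e^{c₀(t − s(t)) − √(2c₀)(δt + a(t))} · (δt + a(t))^{(d−1)/2} ≤ e^{−Ct} · e^{−λ(t − s(t)) − √(−2λ)(δt + a(t))}. -/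

import Mathlib

/-! Taking logarithms, the claim says that `g(t) + K log R(t) + B a(t) ≤ (ε - C) t` for large `t`,
where `R(t) = δt + a(t)`, `K = (d - 1)/2`, `B = √(-2λ) - √(2c₀)` and
`ε = (1 - α)(-λ - c₀) - Bδ` (using `t - s(t) ≥ (1 - α)t` and `c₀ + λ < 0`).
The lower bound on `c₀` is exactly what makes `ε` positive, since
`ε = (√(-λ) - √c₀)((1 - α)(√(-λ) + √c₀) - √2 δ)`, and the left-hand side is `o(t)`,
so `C = ε/2` works. -/

open Filter Real Asymptotics Topology

lemma isLittleO_id_atTop_of_tendsto_div {f : ℝ → ℝ}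
    (hf : Tendsto (fun t => f t / t) atTop (𝓝 0)) : f =o[atTop] id :=
  (isLittleO_iff_tendsto' ((eventually_ne_atTop 0).mono fun _ ht h => absurd h ht)).2 hf

lemma tendsto_mul_add_div_atTop {a : ℝ → ℝ} (c : ℝ)
    (ha : Tendsto (fun t => a t / t) atTop (𝓝 0)) :
    Tendsto (fun t => (c * t + a t) / t) atTop (𝓝 c) := by
  refine (by simpa using ha.const_add c : Tendsto _ _ (𝓝 c)).congr' ?_
  filter_upwards [eventually_ne_atTop 0] with t ht
  field_simp

lemma isLittleO_log_atTop_of_tendsto_div {f : ℝ → ℝ} {c : ℝ} (hc : 0 < c)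
    (hf : Tendsto (fun t => f t / t) atTop (𝓝 c)) :
    (fun t => log (f t)) =o[atTop] id := by
  have hlog_div : (fun t => log (f t / t)) =o[atTop] id :=
    ((hf.log hc.ne').isBigO_one ℝ).trans_isLittleO (isLittleO_const_id_atTop 1)
  refine (hlog_div.add isLittleO_log_id_atTop).congr' ?_ EventuallyEq.rfl
  filter_upwards [hf.eventually (lt_mem_nhds hc), eventually_gt_atTop 0] with t hft ht
  have hf0 : f t ≠ 0 := fun h => by simp [h] at hft
  rw [log_div hf0 ht.ne', sub_add_cancel]

lemma sqrt_sub_sqrt_mul_lt_mul_sub {L c α δ : ℝ} (hc : 0 ≤ c) (hcL : c < L) (hα : α < 1)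
    (h : √2 * δ / (1 - α) - √L < √c) :
    (√(2 * L) - √(2 * c)) * δ < (1 - α) * (L - c) := by
  have hα' : 0 < 1 - α := sub_pos.2 hα
  have hsqrt : √c < √L := sqrt_lt_sqrt hc hcL
  have hδ : √2 * δ < (1 - α) * (√L + √c) := by
    rw [div_sub' hα'.ne', div_lt_iff₀ hα'] at h
    linarith
  have hfactor : (1 - α) * (L - c) - (√(2 * L) - √(2 * c)) * δ
      = (√L - √c) * ((1 - α) * (√L + √c) - √2 * δ) := by
    rw [sqrt_mul zero_le_two, sqrt_mul zero_le_two]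
    nth_rewrite 1 [← sq_sqrt (hc.trans hcL.le), ← sq_sqrt hc]
    ring
  nlinarith [mul_pos (sub_pos.2 hsqrt) (sub_pos.2 hδ)]

lemma exp_mul_exp_mul_rpow_le {x y z w R K : ℝ} (hR : 0 < R) (h : x + y + K * log R ≤ z + w) :
    exp x * exp y * R ^ K ≤ exp z * exp w := by
  rw [rpow_def_of_pos hR, ← exp_add, ← exp_add, ← exp_add, mul_comm (log R)]
  exact exp_le_exp.2 h

theorem stmt9_general (d : ℕ) (lam : ℝ)
    (δ : ℝ) (hδ : δ ∈ Set.Ioo 0 (Real.sqrt (-2 * lam)))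
    (α : ℝ) (hα : α ∈ Set.Ioo (0 : ℝ) (1 - δ / Real.sqrt (-2 * lam)))
    (c₀ : ℝ)
    (hc₀l : (max 0 (Real.sqrt 2 * δ / (1 - α) - Real.sqrt (-lam))) ^ 2 < c₀)
    (hc₀r : c₀ < -lam)
    (a g : ℝ → ℝ)
    (haoto : Tendsto (fun t => a t / t) atTop (nhds 0))
    (hgoto : Tendsto (fun t => g t / t) atTop (nhds 0))
    (s : ℝ → ℝ) (hsα : ∀ t > 0, s t ≤ α * t) :
    ∃ C > 0, ∃ T > (0 : ℝ), ∀ t ≥ T,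
      Real.exp (g t) * Real.exp (c₀ * (t - s t) - Real.sqrt (2 * c₀) * (δ * t + a t)) *
          (δ * t + a t) ^ (((d : ℝ) - 1) / 2) ≤
        Real.exp (-C * t) *
          Real.exp (-lam * (t - s t) - Real.sqrt (-2 * lam) * (δ * t + a t)) := by
  obtain ⟨hδ, -⟩ := hδ
  have hc₀ : 0 < c₀ := (sq_nonneg _).trans_lt hc₀l
  have hα : α < 1 := by
    have := div_pos hδ (sqrt_pos.2 (by linarith : 0 < -2 * lam))
    linarith [hα.2]
  set K : ℝ := ((d : ℝ) - 1) / 2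
  set B : ℝ := √(-2 * lam) - √(2 * c₀)
  set ε : ℝ := (1 - α) * (-lam - c₀) - B * δ
  have hε : 0 < ε := by
    have hgap := sqrt_sub_sqrt_mul_lt_mul_sub (L := -lam) hc₀.le hc₀r hα
      (lt_of_le_of_lt (le_max_right 0 _) ((lt_sqrt (le_max_left _ _)).2 hc₀l))
    rw [show 2 * -lam = -2 * lam by ring] at hgap
    linarith
  have hR := tendsto_mul_add_div_atTop δ haoto
  have herr : (fun t => g t + K * log (δ * t + a t) + B * a t) =o[atTop] id :=
    ((isLittleO_id_atTop_of_tendsto_div hgoto).add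
      ((isLittleO_log_atTop_of_tendsto_div hδ hR).const_mul_left K)).add
      ((isLittleO_id_atTop_of_tendsto_div haoto).const_mul_left B)
  obtain ⟨T, hT⟩ := eventually_atTop.1 <| (herr.bound (half_pos hε)).and <|
    (hR.eventually (lt_mem_nhds hδ)).and (eventually_gt_atTop 0)
  refine ⟨ε / 2, half_pos hε, max T 1, by positivity, fun t ht => ?_⟩
  obtain ⟨hbound, hRt, ht0⟩ := hT t (le_of_max_le_left ht)
  have hRpos : 0 < δ * t + a t := (div_pos_iff_of_pos_right ht0).1 hRt
  rw [Real.norm_eq_abs, Real.norm_eq_abs, id, abs_of_pos ht0] at hbound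
  have hts : (c₀ + lam) * (t - s t) ≤ (c₀ + lam) * ((1 - α) * t) :=
    mul_le_mul_of_nonpos_left (by linarith [hsα t ht0]) (by linarith)
  refine exp_mul_exp_mul_rpow_le hRpos ?_
  linear_combination (le_abs_self _).trans hbound + hts

/-- Elementary exponential domination used for the `K₂` estimate: for
`max(0, √2·δ/(1−α) − √(−λ))² < c₀ < −λ` and `a, g = o(t)`, `0 ≤ s(t) ≤ αt`,
`e^{g(t)} e^{c₀(t−s(t)) − √(2c₀)(δt+a(t))} (δt+a(t))^{(d−1)/2}
  ≤ e^{−Ct} e^{−λ(t−s(t)) − √(−2λ)(δt+a(t))}` for all large `t`. -/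
theorem stmt9 (d : ℕ) (hd : 1 ≤ d) (lam : ℝ) (hlam : lam < 0)
    (δ : ℝ) (hδ : δ ∈ Set.Ioo 0 (Real.sqrt (-2 * lam)))
    (α : ℝ) (hα : α ∈ Set.Ioo (0 : ℝ) (1 - δ / Real.sqrt (-2 * lam)))
    (c₀ : ℝ)
    (hc₀l : (max 0 (Real.sqrt 2 * δ / (1 - α) - Real.sqrt (-lam))) ^ 2 < c₀)
    (hc₀r : c₀ < -lam)
    (a g : ℝ → ℝ)
    (haoto : Tendsto (fun t => a t / t) atTop (nhds 0))
    (hgoto : Tendsto (fun t => g t / t) atTop (nhds 0))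
    (s : ℝ → ℝ) (hs0 : ∀ t > 0, 0 ≤ s t) (hsα : ∀ t > 0, s t ≤ α * t) :
    ∃ C > 0, ∃ T > (0 : ℝ), ∀ t ≥ T,
      Real.exp (g t) * Real.exp (c₀ * (t - s t) - Real.sqrt (2 * c₀) * (δ * t + a t)) *
          (δ * t + a t) ^ (((d : ℝ) - 1) / 2) ≤
        Real.exp (-C * t) *
          Real.exp (-lam * (t - s t) - Real.sqrt (-2 * lam) * (δ * t + a t)) :=
  stmt9_general d lam δ hδ α hα c₀ hc₀l hc₀r a g haoto hgoto s hsα
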